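/- There exists C > 0 such that for all η = (η₁,η₂,η₃) ∈ ℝ³ with η ≠ 0 and 3η₁² ≠ η₂²+η₃², and for each index pair (j,k) ∈ {(2,1),(2,2),(3,1),(3,2)}: |C_{j,k}(η)| ≤ C (η₁²+η₂²+η₃²)^{1/2}(3η₁²−η₂²−η₃²)^{−2}, and |∂_{η_j}C_{j,k}(η)| ≤ C [ (3η₁²−η₂²−η₃²)^{−2} + (η₁²+η₂²+η₃²) |3η₁²−η₂²−η₃²|^{−3} ]. -/

import Mathlib

/-!
Write r = η₁²+η₂²+η₃², q = 3η₁²−η₂²−η₃² and W = (3η₁²+η₂²+η₃²)/(r q²), so that every C_{j,k}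
is ±(2/3)·η_i·W. Since 3η₁²+η₂²+η₃² ≤ 3r we get |W| ≤ 3/q², and
∂W/∂η_j = 4η_j((3η₁²+η₂²+η₃²)/(r q³) − η₁²/(r² q²)); as |η_i η_j| ≤ r this gives
|η_i ∂W/∂η_j| ≤ 4/q² + 12r/|q|³. The Leibniz rule then bounds all four derivatives, and
|η_i| ≤ √r bounds the values.
-/

noncomputable section

/-- p(η) = (η₁²+η₂²+η₃²)(3η₁²−η₂²−η₃²)². -/
def pZK (η₁ η₂ η₃ : ℝ) : ℝ :=
  (η₁ ^ 2 + η₂ ^ 2 + η₃ ^ 2) * (3 * η₁ ^ 2 - η₂ ^ 2 - η₃ ^ 2) ^ 2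

def A0ZK (η₁ η₂ η₃ : ℝ) : ℝ :=
  (9 * η₁ ^ 4 + 30 * η₁ ^ 2 * (η₂ ^ 2 + η₃ ^ 2) + 5 * (η₂ ^ 2 + η₃ ^ 2) ^ 2)
    / (3 * pZK η₁ η₂ η₃)

def A1ZK (η₁ η₂ η₃ : ℝ) : ℝ :=
  -(η₁ * (9 * η₁ ^ 4 + 18 * η₁ ^ 2 * (η₂ ^ 2 + η₃ ^ 2) + (η₂ ^ 2 + η₃ ^ 2) ^ 2))
    / (3 * pZK η₁ η₂ η₃)

def A2ZK (η₁ η₂ η₃ : ℝ) : ℝ :=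
  -(4 * η₂ * (η₂ ^ 2 + η₃ ^ 2) * (3 * η₁ ^ 2 + η₂ ^ 2 + η₃ ^ 2)) / (3 * pZK η₁ η₂ η₃)

def A3ZK (η₁ η₂ η₃ : ℝ) : ℝ :=
  -(4 * η₃ * (η₂ ^ 2 + η₃ ^ 2) * (3 * η₁ ^ 2 + η₂ ^ 2 + η₃ ^ 2)) / (3 * pZK η₁ η₂ η₃)

def B01ZK (η₁ η₂ η₃ : ℝ) : ℝ := -(4 * η₁ * (η₂ ^ 2 + η₃ ^ 2)) / pZK η₁ η₂ η₃

def B02ZK (η₁ η₂ η₃ : ℝ) : ℝ :=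
  -(2 * η₂ * (3 * η₁ ^ 2 + η₂ ^ 2 + η₃ ^ 2)) / (3 * pZK η₁ η₂ η₃)

def B03ZK (η₁ η₂ η₃ : ℝ) : ℝ :=
  -(2 * η₃ * (3 * η₁ ^ 2 + η₂ ^ 2 + η₃ ^ 2)) / (3 * pZK η₁ η₂ η₃)

def B11ZK (η₁ η₂ η₃ : ℝ) : ℝ := 4 * η₁ ^ 2 * (η₂ ^ 2 + η₃ ^ 2) / pZK η₁ η₂ η₃

def B12ZK (η₁ η₂ η₃ : ℝ) : ℝ :=
  2 * η₁ * η₂ * (3 * η₁ ^ 2 + η₂ ^ 2 + η₃ ^ 2) / (3 * pZK η₁ η₂ η₃)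

def B13ZK (η₁ η₂ η₃ : ℝ) : ℝ :=
  2 * η₁ * η₃ * (3 * η₁ ^ 2 + η₂ ^ 2 + η₃ ^ 2) / (3 * pZK η₁ η₂ η₃)

def B21ZK (η₁ η₂ η₃ : ℝ) : ℝ := 4 * η₁ * η₂ * (η₂ ^ 2 + η₃ ^ 2) / pZK η₁ η₂ η₃

def B31ZK (η₁ η₂ η₃ : ℝ) : ℝ := 4 * η₁ * η₃ * (η₂ ^ 2 + η₃ ^ 2) / pZK η₁ η₂ η₃

def B22ZK (η₁ η₂ η₃ : ℝ) : ℝ :=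
  2 * (η₂ ^ 2 + η₃ ^ 2) * (3 * η₁ ^ 2 + η₂ ^ 2 + η₃ ^ 2) / (3 * pZK η₁ η₂ η₃)

def B32ZK (η₁ η₂ η₃ : ℝ) : ℝ :=
  2 * (η₂ ^ 2 + η₃ ^ 2) * (3 * η₁ ^ 2 + η₂ ^ 2 + η₃ ^ 2) / (3 * pZK η₁ η₂ η₃)

def C21ZK (η₁ η₂ η₃ : ℝ) : ℝ :=
  -(2 * η₃ * (3 * η₁ ^ 2 + η₂ ^ 2 + η₃ ^ 2)) / (3 * pZK η₁ η₂ η₃)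

def C31ZK (η₁ η₂ η₃ : ℝ) : ℝ :=
  -(2 * η₂ * (3 * η₁ ^ 2 + η₂ ^ 2 + η₃ ^ 2)) / (3 * pZK η₁ η₂ η₃)

def C22ZK (η₁ η₂ η₃ : ℝ) : ℝ :=
  2 * η₂ * (3 * η₁ ^ 2 + η₂ ^ 2 + η₃ ^ 2) / (3 * pZK η₁ η₂ η₃)

def C32ZK (η₁ η₂ η₃ : ℝ) : ℝ :=
  2 * η₃ * (3 * η₁ ^ 2 + η₂ ^ 2 + η₃ ^ 2) / (3 * pZK η₁ η₂ η₃)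

def zkWeight (x y z : ℝ) : ℝ :=
  (3 * x ^ 2 + y ^ 2 + z ^ 2) / ((x ^ 2 + y ^ 2 + z ^ 2) * (3 * x ^ 2 - y ^ 2 - z ^ 2) ^ 2)

def zkWeightDeriv (x y z : ℝ) : ℝ :=
  4 * y * ((3 * x ^ 2 + y ^ 2 + z ^ 2) / ((x ^ 2 + y ^ 2 + z ^ 2) * (3 * x ^ 2 - y ^ 2 - z ^ 2) ^ 3)
    - x ^ 2 / ((x ^ 2 + y ^ 2 + z ^ 2) ^ 2 * (3 * x ^ 2 - y ^ 2 - z ^ 2) ^ 2))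

variable {x y z : ℝ}

lemma sum_sq_pos_of_three_sq_sub_ne_zero (hq : 3 * x ^ 2 - y ^ 2 - z ^ 2 ≠ 0) :
    0 < x ^ 2 + y ^ 2 + z ^ 2 := by
  refine lt_of_le_of_ne (by positivity) fun hr => hq ?_
  linarith [sq_nonneg x, sq_nonneg y, sq_nonneg z]

lemma three_sq_add_div_sum_sq_le_three (hr : 0 < x ^ 2 + y ^ 2 + z ^ 2) :
    (3 * x ^ 2 + y ^ 2 + z ^ 2) / (x ^ 2 + y ^ 2 + z ^ 2) ≤ 3 := by
  rw [div_le_iff₀ hr]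
  nlinarith [sq_nonneg y, sq_nonneg z]

lemma abs_zkWeight_le (hq : 3 * x ^ 2 - y ^ 2 - z ^ 2 ≠ 0) :
    |zkWeight x y z| ≤ 3 * ((3 * x ^ 2 - y ^ 2 - z ^ 2) ^ 2)⁻¹ := by
  rw [zkWeight, div_mul_eq_div_div, abs_of_nonneg (by positivity), div_eq_mul_inv]
  gcongr
  exact three_sq_add_div_sum_sq_le_three (sum_sq_pos_of_three_sq_sub_ne_zero hq)

lemma abs_mul_zkWeight_le (hq : 3 * x ^ 2 - y ^ 2 - z ^ 2 ≠ 0) {w : ℝ}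
    (hw : w ^ 2 ≤ x ^ 2 + y ^ 2 + z ^ 2) :
    |w * zkWeight x y z|
      ≤ 3 * (x ^ 2 + y ^ 2 + z ^ 2) ^ ((1 : ℝ) / 2)
        * ((3 * x ^ 2 - y ^ 2 - z ^ 2) ^ 2)⁻¹ := by
  rw [← Real.sqrt_eq_rpow, abs_mul, mul_assoc, mul_left_comm]
  exact mul_le_mul (Real.abs_le_sqrt hw) (abs_zkWeight_le hq) (abs_nonneg _) (by positivity)

lemma hasDerivAt_zkWeight (hq : 3 * x ^ 2 - y ^ 2 - z ^ 2 ≠ 0) :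
    HasDerivAt (fun s => zkWeight x s z) (zkWeightDeriv x y z) y := by
  have hr := (sum_sq_pos_of_three_sq_sub_ne_zero hq).ne'
  have hs : HasDerivAt (fun s : ℝ => s ^ 2) (2 * y) y := by simpa using hasDerivAt_pow 2 y
  have hN := (hs.const_add (3 * x ^ 2)).add_const (z ^ 2)
  have hR := (hs.const_add (x ^ 2)).add_const (z ^ 2)
  have hQ := ((hs.const_sub (3 * x ^ 2)).sub_const (z ^ 2)).fun_pow 2
  refine (hN.fun_div (hR.fun_mul hQ) (mul_ne_zero hr (pow_ne_zero 2 hq))).congr_deriv ?_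
  simp only [zkWeightDeriv, Nat.cast_ofNat, Nat.add_one_sub_one, pow_one]
  field_simp
  ring

lemma abs_mul_zkWeightDeriv_le (hq : 3 * x ^ 2 - y ^ 2 - z ^ 2 ≠ 0) {w : ℝ}
    (hw : w ^ 2 ≤ x ^ 2 + y ^ 2 + z ^ 2) :
    |w * zkWeightDeriv x y z| ≤ 4 * ((3 * x ^ 2 - y ^ 2 - z ^ 2) ^ 2)⁻¹
      + 12 * (x ^ 2 + y ^ 2 + z ^ 2) * (|3 * x ^ 2 - y ^ 2 - z ^ 2| ^ 3)⁻¹ := by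
  have hr := sum_sq_pos_of_three_sq_sub_ne_zero hq
  have hwy : |w * y| ≤ x ^ 2 + y ^ 2 + z ^ 2 := by
    refine abs_le_of_sq_le_sq ?_ hr.le
    rw [mul_pow, sq (x ^ 2 + y ^ 2 + z ^ 2)]
    exact mul_le_mul hw (by linarith [sq_nonneg x, sq_nonneg z]) (sq_nonneg y) hr.le
  have hN :
      |(3 * x ^ 2 + y ^ 2 + z ^ 2) / ((x ^ 2 + y ^ 2 + z ^ 2) * (3 * x ^ 2 - y ^ 2 - z ^ 2) ^ 3)|
        ≤ 3 * (|3 * x ^ 2 - y ^ 2 - z ^ 2| ^ 3)⁻¹ := by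
    rw [abs_div, abs_mul, abs_pow, abs_of_pos hr, abs_of_nonneg (by positivity),
      div_mul_eq_div_div, div_eq_mul_inv]
    gcongr
    exact three_sq_add_div_sum_sq_le_three hr
  have hX : |x ^ 2 / ((x ^ 2 + y ^ 2 + z ^ 2) ^ 2 * (3 * x ^ 2 - y ^ 2 - z ^ 2) ^ 2)|
      ≤ (x ^ 2 + y ^ 2 + z ^ 2)⁻¹ * ((3 * x ^ 2 - y ^ 2 - z ^ 2) ^ 2)⁻¹ := by
    rw [abs_of_nonneg (by positivity)]
    calc _ ≤ (x ^ 2 + y ^ 2 + z ^ 2)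
          / ((x ^ 2 + y ^ 2 + z ^ 2) ^ 2 * (3 * x ^ 2 - y ^ 2 - z ^ 2) ^ 2) := by
          gcongr; linarith [sq_nonneg y, sq_nonneg z]
      _ = _ := by field_simp
  calc |w * zkWeightDeriv x y z|
      = 4 * |w * y|
          * |(3 * x ^ 2 + y ^ 2 + z ^ 2)
              / ((x ^ 2 + y ^ 2 + z ^ 2) * (3 * x ^ 2 - y ^ 2 - z ^ 2) ^ 3)
            - x ^ 2 / ((x ^ 2 + y ^ 2 + z ^ 2) ^ 2 * (3 * x ^ 2 - y ^ 2 - z ^ 2) ^ 2)| := by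
        simp only [zkWeightDeriv, abs_mul, Nat.abs_ofNat]
        ring
    _ ≤ 4 * (x ^ 2 + y ^ 2 + z ^ 2) * (3 * (|3 * x ^ 2 - y ^ 2 - z ^ 2| ^ 3)⁻¹
          + (x ^ 2 + y ^ 2 + z ^ 2)⁻¹ * ((3 * x ^ 2 - y ^ 2 - z ^ 2) ^ 2)⁻¹) := by
        gcongr
        exact (abs_sub _ _).trans (add_le_add hN hX)
    _ = _ := by field_simp; ring

lemma C21ZK_eq_mul_zkWeight (x y z : ℝ) : C21ZK x y z = -(2 / 3) * (z * zkWeight x y z) := by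
  simp only [C21ZK, pZK, zkWeight, div_eq_mul_inv, mul_inv]; ring

lemma C22ZK_eq_mul_zkWeight (x y z : ℝ) : C22ZK x y z = 2 / 3 * (y * zkWeight x y z) := by
  simp only [C22ZK, pZK, zkWeight, div_eq_mul_inv, mul_inv]; ring

lemma C31ZK_eq_C21ZK_swap (x y z : ℝ) : C31ZK x y z = C21ZK x z y := by
  unfold C31ZK C21ZK pZK; ring

lemma C32ZK_eq_C22ZK_swap (x y z : ℝ) : C32ZK x y z = C22ZK x z y := by
  unfold C32ZK C22ZK pZK; ring

lemma abs_C21ZK_le (hq : 3 * x ^ 2 - y ^ 2 - z ^ 2 ≠ 0) :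
    |C21ZK x y z|
      ≤ 2 * (x ^ 2 + y ^ 2 + z ^ 2) ^ ((1 : ℝ) / 2)
        * ((3 * x ^ 2 - y ^ 2 - z ^ 2) ^ 2)⁻¹ := by
  have h := abs_mul_zkWeight_le hq (w := z) (by linarith [sq_nonneg x, sq_nonneg y])
  rw [C21ZK_eq_mul_zkWeight, abs_mul, abs_neg, abs_of_pos (by norm_num : (0 : ℝ) < 2 / 3)]
  linarith

lemma abs_C22ZK_le (hq : 3 * x ^ 2 - y ^ 2 - z ^ 2 ≠ 0) :
    |C22ZK x y z|
      ≤ 2 * (x ^ 2 + y ^ 2 + z ^ 2) ^ ((1 : ℝ) / 2)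
        * ((3 * x ^ 2 - y ^ 2 - z ^ 2) ^ 2)⁻¹ := by
  have h := abs_mul_zkWeight_le hq (w := y) (by linarith [sq_nonneg x, sq_nonneg z])
  rw [C22ZK_eq_mul_zkWeight, abs_mul, abs_of_pos (by norm_num : (0 : ℝ) < 2 / 3)]
  linarith

lemma abs_C31ZK_le (hq : 3 * x ^ 2 - y ^ 2 - z ^ 2 ≠ 0) :
    |C31ZK x y z|
      ≤ 2 * (x ^ 2 + y ^ 2 + z ^ 2) ^ ((1 : ℝ) / 2)
        * ((3 * x ^ 2 - y ^ 2 - z ^ 2) ^ 2)⁻¹ := by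
  rw [show C31ZK x y z = -C22ZK x y z by unfold C31ZK C22ZK; ring, abs_neg]
  exact abs_C22ZK_le hq

lemma abs_C32ZK_le (hq : 3 * x ^ 2 - y ^ 2 - z ^ 2 ≠ 0) :
    |C32ZK x y z|
      ≤ 2 * (x ^ 2 + y ^ 2 + z ^ 2) ^ ((1 : ℝ) / 2)
        * ((3 * x ^ 2 - y ^ 2 - z ^ 2) ^ 2)⁻¹ := by
  rw [show C32ZK x y z = -C21ZK x y z by unfold C32ZK C21ZK; ring, abs_neg]
  exact abs_C21ZK_le hq

lemma abs_deriv_C21ZK_le (hq : 3 * x ^ 2 - y ^ 2 - z ^ 2 ≠ 0) :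
    |deriv (fun s => C21ZK x s z) y| ≤ 8 * (((3 * x ^ 2 - y ^ 2 - z ^ 2) ^ 2)⁻¹
      + (x ^ 2 + y ^ 2 + z ^ 2) * (|3 * x ^ 2 - y ^ 2 - z ^ 2| ^ 3)⁻¹) := by
  have hderiv := ((hasDerivAt_zkWeight hq).const_mul z).const_mul (-(2 / 3))
  have h := abs_mul_zkWeightDeriv_le hq (w := z) (by linarith [sq_nonneg x, sq_nonneg y])
  have hQ : 0 ≤ ((3 * x ^ 2 - y ^ 2 - z ^ 2) ^ 2)⁻¹ := by positivity
  have hR : 0 ≤ (x ^ 2 + y ^ 2 + z ^ 2) * (|3 * x ^ 2 - y ^ 2 - z ^ 2| ^ 3)⁻¹ := by positivity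
  simp only [C21ZK_eq_mul_zkWeight]
  rw [hderiv.deriv, abs_mul, abs_neg, abs_of_pos (by norm_num : (0 : ℝ) < 2 / 3)]
  linarith

lemma abs_deriv_C22ZK_le (hq : 3 * x ^ 2 - y ^ 2 - z ^ 2 ≠ 0) :
    |deriv (fun s => C22ZK x s z) y| ≤ 8 * (((3 * x ^ 2 - y ^ 2 - z ^ 2) ^ 2)⁻¹
      + (x ^ 2 + y ^ 2 + z ^ 2) * (|3 * x ^ 2 - y ^ 2 - z ^ 2| ^ 3)⁻¹) := by
  have hderiv := ((hasDerivAt_id' y).fun_mul (hasDerivAt_zkWeight hq)).const_mul (2 / 3)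
  have hW := abs_zkWeight_le hq
  have h := abs_mul_zkWeightDeriv_le hq (w := y) (by linarith [sq_nonneg x, sq_nonneg z])
  have hQ : 0 ≤ ((3 * x ^ 2 - y ^ 2 - z ^ 2) ^ 2)⁻¹ := by positivity
  have hR : 0 ≤ (x ^ 2 + y ^ 2 + z ^ 2) * (|3 * x ^ 2 - y ^ 2 - z ^ 2| ^ 3)⁻¹ := by positivity
  simp only [C22ZK_eq_mul_zkWeight]
  rw [hderiv.deriv, abs_mul, abs_of_pos (by norm_num : (0 : ℝ) < 2 / 3), one_mul]
  linarith [abs_add_le (zkWeight x y z) (y * zkWeightDeriv x y z)]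

lemma abs_deriv_C31ZK_le (hq : 3 * x ^ 2 - y ^ 2 - z ^ 2 ≠ 0) :
    |deriv (fun s => C31ZK x y s) z| ≤ 8 * (((3 * x ^ 2 - y ^ 2 - z ^ 2) ^ 2)⁻¹
      + (x ^ 2 + y ^ 2 + z ^ 2) * (|3 * x ^ 2 - y ^ 2 - z ^ 2| ^ 3)⁻¹) := by
  have h := abs_deriv_C21ZK_le (x := x) (y := z) (z := y) (by rwa [sub_right_comm])
  simpa only [← C31ZK_eq_C21ZK_swap, add_right_comm (x ^ 2) (z ^ 2),
    sub_right_comm (3 * x ^ 2) (z ^ 2)] using h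

lemma abs_deriv_C32ZK_le (hq : 3 * x ^ 2 - y ^ 2 - z ^ 2 ≠ 0) :
    |deriv (fun s => C32ZK x y s) z| ≤ 8 * (((3 * x ^ 2 - y ^ 2 - z ^ 2) ^ 2)⁻¹
      + (x ^ 2 + y ^ 2 + z ^ 2) * (|3 * x ^ 2 - y ^ 2 - z ^ 2| ^ 3)⁻¹) := by
  have h := abs_deriv_C22ZK_le (x := x) (y := z) (z := y) (by rwa [sub_right_comm])
  simpa only [← C32ZK_eq_C22ZK_swap, add_right_comm (x ^ 2) (z ^ 2),
    sub_right_comm (3 * x ^ 2) (z ^ 2)] using h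

/-- Bounds on C_{j,k} and on ∂_{η_j}C_{j,k} for (j,k) ∈ {(2,1),(2,2),(3,1),(3,2)}. -/
theorem Cjk_bounds :
    ∃ C > 0, ∀ η₁ η₂ η₃ : ℝ, ¬(η₁ = 0 ∧ η₂ = 0 ∧ η₃ = 0) →
      3 * η₁ ^ 2 ≠ η₂ ^ 2 + η₃ ^ 2 →
      (|C21ZK η₁ η₂ η₃| ≤ C * (η₁ ^ 2 + η₂ ^ 2 + η₃ ^ 2) ^ ((1 : ℝ) / 2)
          * ((3 * η₁ ^ 2 - η₂ ^ 2 - η₃ ^ 2) ^ 2)⁻¹) ∧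
      (|C22ZK η₁ η₂ η₃| ≤ C * (η₁ ^ 2 + η₂ ^ 2 + η₃ ^ 2) ^ ((1 : ℝ) / 2)
          * ((3 * η₁ ^ 2 - η₂ ^ 2 - η₃ ^ 2) ^ 2)⁻¹) ∧
      (|C31ZK η₁ η₂ η₃| ≤ C * (η₁ ^ 2 + η₂ ^ 2 + η₃ ^ 2) ^ ((1 : ℝ) / 2)
          * ((3 * η₁ ^ 2 - η₂ ^ 2 - η₃ ^ 2) ^ 2)⁻¹) ∧
      (|C32ZK η₁ η₂ η₃| ≤ C * (η₁ ^ 2 + η₂ ^ 2 + η₃ ^ 2) ^ ((1 : ℝ) / 2)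
          * ((3 * η₁ ^ 2 - η₂ ^ 2 - η₃ ^ 2) ^ 2)⁻¹) ∧
      (|deriv (fun s => C21ZK η₁ s η₃) η₂|
          ≤ C * (((3 * η₁ ^ 2 - η₂ ^ 2 - η₃ ^ 2) ^ 2)⁻¹
              + (η₁ ^ 2 + η₂ ^ 2 + η₃ ^ 2) * (|3 * η₁ ^ 2 - η₂ ^ 2 - η₃ ^ 2| ^ 3)⁻¹)) ∧
      (|deriv (fun s => C22ZK η₁ s η₃) η₂|
          ≤ C * (((3 * η₁ ^ 2 - η₂ ^ 2 - η₃ ^ 2) ^ 2)⁻¹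
              + (η₁ ^ 2 + η₂ ^ 2 + η₃ ^ 2) * (|3 * η₁ ^ 2 - η₂ ^ 2 - η₃ ^ 2| ^ 3)⁻¹)) ∧
      (|deriv (fun s => C31ZK η₁ η₂ s) η₃|
          ≤ C * (((3 * η₁ ^ 2 - η₂ ^ 2 - η₃ ^ 2) ^ 2)⁻¹
              + (η₁ ^ 2 + η₂ ^ 2 + η₃ ^ 2) * (|3 * η₁ ^ 2 - η₂ ^ 2 - η₃ ^ 2| ^ 3)⁻¹)) ∧
      (|deriv (fun s => C32ZK η₁ η₂ s) η₃|
          ≤ C * (((3 * η₁ ^ 2 - η₂ ^ 2 - η₃ ^ 2) ^ 2)⁻¹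
              + (η₁ ^ 2 + η₂ ^ 2 + η₃ ^ 2) * (|3 * η₁ ^ 2 - η₂ ^ 2 - η₃ ^ 2| ^ 3)⁻¹)) := by
  refine ⟨8, by norm_num, fun η₁ η₂ η₃ _ h => ?_⟩
  have hq : 3 * η₁ ^ 2 - η₂ ^ 2 - η₃ ^ 2 ≠ 0 := by rwa [sub_sub, sub_ne_zero]
  have hC : 2 * (η₁ ^ 2 + η₂ ^ 2 + η₃ ^ 2) ^ ((1 : ℝ) / 2)
      * ((3 * η₁ ^ 2 - η₂ ^ 2 - η₃ ^ 2) ^ 2)⁻¹ ≤ 8 * (η₁ ^ 2 + η₂ ^ 2 + η₃ ^ 2) ^ ((1 : ℝ) / 2) * ((3 * η₁ ^ 2 - η₂ ^ 2 - η₃ ^ 2) ^ 2)⁻¹ := by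
    gcongr; norm_num
  exact ⟨(abs_C21ZK_le hq).trans hC, (abs_C22ZK_le hq).trans hC, (abs_C31ZK_le hq).trans hC,
    (abs_C32ZK_le hq).trans hC, abs_deriv_C21ZK_le hq, abs_deriv_C22ZK_le hq,
    abs_deriv_C31ZK_le hq, abs_deriv_C32ZK_le hq⟩
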